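/- (Positivity of the dispersion coefficients.) Fix r > 0 and k ∈ ℤ. (i) Principal series: if ν ∈ ℝ and s = −1/2 − iν, then ω̃(k) is a positive real number; explicitly, ω̃(k) = r⁻¹ · ( ((k − 1/2)² + ν²) / 2 ) · ‖Γ((k − 1/2 + iν)/2)‖² / ‖Γ((k + 1/2 + iν)/2)‖², where ‖·‖ denotes the complex absolute value. (ii) Complementary series: if s is real with −1/2 ≤ s < 0, then ω̃(k) is a positive real number. -/

import Mathlib

/-!
On the principal series `s = -1/2 - iν` the four Gamma arguments are `conj w`, `w + 1`, `v` and
`conj v` with `w = (k - 1/2 + iν)/2`, `v = (k + 1/2 + iν)/2`; since `Γ (conj z) = conj (Γ z)` and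
`Γ (w + 1) = w Γ w`, the coefficient collapses to `r⁻¹ · 2|w|² · |Γ w|² / |Γ v|²`.

For real `s ∈ (-1, 0)` and `k ≥ 1` every Gamma argument and `k + s` is positive. For `k ≤ 0` the
reflection formula pairs the Gamma quotient at `k` with the one at `1 - k ≥ 1`: their product is
`-1`, because the sine factors multiply to `sin (π s) / 2` and `-sin (π s) / 2`. So the quotient
is negative exactly when `k + s` is.
-/

noncomputable section

/-- The Fourier coefficients `ω̃(k)` of the dispersion relation on de Sitter space. -/
def omt (r : ℝ) (s : ℂ) (k : ℤ) : ℂ :=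
  (r : ℂ)⁻¹ * ((k : ℂ) + s) *
    (Complex.Gamma (((k : ℂ) + s) / 2) * Complex.Gamma (((k : ℂ) + 1 - s) / 2)) /
    (Complex.Gamma (((k : ℂ) - s) / 2) * Complex.Gamma (((k : ℂ) + 1 + s) / 2))

section ComplementarySeries

open Real

def gammaRatio (s x : ℝ) : ℝ :=
  Gamma ((x + s) / 2) * Gamma ((x + 1 - s) / 2) / (Gamma ((x - s) / 2) * Gamma ((x + 1 + s) / 2))

theorem omt_ofReal (r s : ℝ) (k : ℤ) : omt r s k = ↑(r⁻¹ * ((k + s) * gammaRatio s k)) := by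
  unfold omt gammaRatio
  push_cast [← Complex.Gamma_ofReal]
  ring

theorem two_mul_sin_mul_sin_of_add_eq_int_add_half (k : ℤ) {a b : ℝ} (h : a + b = k + 1 / 2) :
    2 * sin (π * a) * sin (π * b) = cos (π * (a - b)) := by
  rw [two_mul_sin_mul_sin, show π * a + π * b = k * π + π / 2 by rw [← mul_add, h]; ring,
    cos_add_pi_div_two, sin_int_mul_pi, neg_zero, sub_zero, mul_sub]

theorem gammaRatio_mul_gammaRatio_one_sub {s : ℝ} (hs : sin (π * s) ≠ 0) (k : ℤ) :
    gammaRatio s k * gammaRatio s (1 - k) = -1 := by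
  set A := ((k : ℝ) + s) / 2
  set B := ((k : ℝ) + 1 - s) / 2
  set C := ((k : ℝ) - s) / 2
  set D := ((k : ℝ) + 1 + s) / 2
  have hAB : 2 * sin (π * A) * sin (π * B) = sin (π * s) := by
    rw [two_mul_sin_mul_sin_of_add_eq_int_add_half k (by ring), ← cos_sub_pi_div_two]
    congr 1; simp only [A, B]; ring
  have hCD : 2 * sin (π * C) * sin (π * D) = -sin (π * s) := by
    rw [two_mul_sin_mul_sin_of_add_eq_int_add_half k (by ring), ← cos_add_pi_div_two, ← cos_neg]
    congr 1; simp only [C, D]; ring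
  have hA : sin (π * A) ≠ 0 := fun h ↦ hs (by rw [← hAB, h, mul_zero, zero_mul])
  have hB : sin (π * B) ≠ 0 := fun h ↦ hs (by rw [← hAB, h, mul_zero])
  have hC : sin (π * C) ≠ 0 := fun h ↦ hs (neg_eq_zero.mp (by rw [← hCD, h, mul_zero, zero_mul]))
  have hD : sin (π * D) ≠ 0 := fun h ↦ hs (neg_eq_zero.mp (by rw [← hCD, h, mul_zero]))
  calc gammaRatio s k * gammaRatio s (1 - k)
      = Gamma A * Gamma (1 - A) * (Gamma B * Gamma (1 - B)) /
          (Gamma C * Gamma (1 - C) * (Gamma D * Gamma (1 - D))) := by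
        simp only [gammaRatio]
        rw [show (1 - (k : ℝ) + s) / 2 = 1 - B by ring,
          show (1 - (k : ℝ) + 1 - s) / 2 = 1 - A by ring,
          show (1 - (k : ℝ) - s) / 2 = 1 - D by ring,
          show (1 - (k : ℝ) + 1 + s) / 2 = 1 - C by ring]
        ring
    _ = π / sin (π * A) * (π / sin (π * B)) / (π / sin (π * C) * (π / sin (π * D))) := by
        simp only [Gamma_mul_Gamma_one_sub]
    _ = -1 := by
        field_simp
        linear_combination (hCD + hAB) / 2

theorem gammaRatio_pos {s x : ℝ} (h : |s| < x) : 0 < gammaRatio s x := by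
  obtain ⟨h₁, h₂⟩ := abs_lt.mp h
  unfold gammaRatio
  apply div_pos <;> apply mul_pos <;> apply Gamma_pos_of_pos <;> linarith

theorem mul_gammaRatio_pos {s : ℝ} (hs₀ : -1 < s) (hs₁ : s < 0) (k : ℤ) :
    0 < (k + s) * gammaRatio s k := by
  rcases le_or_gt k 0 with hk | hk
  · have hk' : (k : ℝ) ≤ 0 := by exact_mod_cast hk
    have hsin : sin (π * s) ≠ 0 :=
      (sin_neg_of_neg_of_neg_pi_lt (by nlinarith [pi_pos]) (by nlinarith [pi_pos])).ne
    have hpos : 0 < gammaRatio s (1 - k) := gammaRatio_pos (abs_lt.mpr ⟨by linarith, by linarith⟩)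
    have hneg : gammaRatio s k < 0 := by
      nlinarith [gammaRatio_mul_gammaRatio_one_sub hsin k]
    exact mul_pos_of_neg_of_neg (by linarith) hneg
  · have hk' : (1 : ℝ) ≤ k := by exact_mod_cast hk
    exact mul_pos (by linarith) (gammaRatio_pos (abs_lt.mpr ⟨by linarith, by linarith⟩))

end ComplementarySeries

section PrincipalSeries

open Complex ComplexConjugate

theorem Complex.Gamma_mul_Gamma_conj (z : ℂ) : Gamma z * Gamma (conj z) = (‖Gamma z‖ : ℂ) ^ 2 := by
  rw [Gamma_conj, mul_conj']

theorem Complex.Gamma_conj_mul_Gamma_add_one {z : ℂ} (hz : z ≠ 0) :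
    Gamma (conj z) * Gamma (z + 1) = z * (‖Gamma z‖ : ℂ) ^ 2 := by
  rw [Gamma_add_one z hz, ← Gamma_mul_Gamma_conj]
  ring

theorem Complex.Gamma_ne_zero_of_re_ne_int {z : ℂ} (h : ∀ n : ℤ, z.re ≠ n) : Gamma z ≠ 0 :=
  Gamma_ne_zero fun m hm ↦ h (-m) (by simp [hm])

theorem odd_div_four_ne_int {m : ℤ} (hm : Odd m) (n : ℤ) : (m : ℝ) / 4 ≠ n := by
  obtain ⟨a, rfl⟩ := hm
  rw [Ne, div_eq_iff (by norm_num)]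
  exact_mod_cast (by omega : 2 * a + 1 ≠ n * 4)

theorem re_int_add_half_div_two_ne_int (k : ℤ) (ν : ℝ) (n : ℤ) :
    (((k : ℂ) - 1 / 2 + ν * I) / 2).re ≠ n ∧ (((k : ℂ) + 1 / 2 + ν * I) / 2).re ≠ n := by
  have h₁ : (((k : ℂ) - 1 / 2 + ν * I) / 2).re = ((2 * k - 1 : ℤ) : ℝ) / 4 := by
    push_cast; simp; ring
  have h₂ : (((k : ℂ) + 1 / 2 + ν * I) / 2).re = ((2 * k + 1 : ℤ) : ℝ) / 4 := by
    push_cast; simp; ring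
  rw [h₁, h₂]
  exact ⟨odd_div_four_ne_int ⟨k - 1, by ring⟩ n, odd_div_four_ne_int (odd_two_mul_add_one k) n⟩

theorem omt_principal_series (r ν : ℝ) (k : ℤ) :
    omt r (-(1 / 2) - ν * I) k =
      (r : ℂ)⁻¹ * (((((k : ℝ) - 1 / 2) ^ 2 + ν ^ 2) / 2 : ℝ) : ℂ) *
        (‖Gamma (((k : ℂ) - 1 / 2 + ν * I) / 2)‖ : ℂ) ^ 2 /
        (‖Gamma (((k : ℂ) + 1 / 2 + ν * I) / 2)‖ : ℂ) ^ 2 := by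
  have hw₀ : ((k : ℂ) - 1 / 2 + ν * I) / 2 ≠ 0 := fun h ↦
    (re_int_add_half_div_two_ne_int k ν 0).1 (by rw [h]; simp)
  set w := ((k : ℂ) - 1 / 2 + ν * I) / 2 with hw
  set v := ((k : ℂ) + 1 / 2 + ν * I) / 2 with hv
  have hwc : conj w = ((k : ℂ) - 1 / 2 - ν * I) / 2 := by simp [hw, map_ofNat, sub_eq_add_neg]
  have hvc : conj v = ((k : ℂ) + 1 / 2 - ν * I) / 2 := by simp [hv, map_ofNat, sub_eq_add_neg]
  have hnorm : 2 * conj w * w = (((((k : ℝ) - 1 / 2) ^ 2 + ν ^ 2) / 2 : ℝ) : ℂ) := by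
    rw [hwc, hw]
    push_cast
    linear_combination (-(ν : ℂ) ^ 2 / 2) * I_sq
  unfold omt
  rw [show ((k : ℂ) + (-(1 / 2) - ν * I)) / 2 = conj w by rw [hwc]; ring,
    show ((k : ℂ) + 1 - (-(1 / 2) - ν * I)) / 2 = w + 1 by rw [hw]; ring,
    show ((k : ℂ) - (-(1 / 2) - ν * I)) / 2 = v by rw [hv]; ring,
    show ((k : ℂ) + 1 + (-(1 / 2) - ν * I)) / 2 = conj v by rw [hvc]; ring,
    show (k : ℂ) + (-(1 / 2) - ν * I) = 2 * conj w by rw [hwc]; ring,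
    Gamma_conj_mul_Gamma_add_one hw₀, Gamma_mul_Gamma_conj, ← hnorm]
  ring

end PrincipalSeries

/-- positivity of the dispersion coefficients: (i) for the principal
series `s = −1/2 − iν`, `ν ∈ ℝ`, the coefficient `ω̃(k)` is a positive real number with
the stated explicit Gamma-quotient form; (ii) for the complementary series
`s ∈ [−1/2, 0) ⊂ ℝ`, `ω̃(k)` is a positive real number. -/
theorem omt_positivity (r : ℝ) (hr : 0 < r) (k : ℤ) :
    (∀ ν : ℝ,
      (omt r (-(1 / 2) - (ν : ℂ) * Complex.I) k).im = 0 ∧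
      0 < (omt r (-(1 / 2) - (ν : ℂ) * Complex.I) k).re ∧
      omt r (-(1 / 2) - (ν : ℂ) * Complex.I) k =
        (r : ℂ)⁻¹ * (((((k : ℝ) - 1 / 2) ^ 2 + ν ^ 2) / 2 : ℝ) : ℂ) *
          ((‖Complex.Gamma (((k : ℂ) - 1 / 2 + (ν : ℂ) * Complex.I) / 2)‖ : ℝ) : ℂ) ^ 2 /
          ((‖Complex.Gamma (((k : ℂ) + 1 / 2 + (ν : ℂ) * Complex.I) / 2)‖ : ℝ) : ℂ) ^ 2) ∧
    (∀ s : ℝ, -(1 / 2) ≤ s → s < 0 →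
      (omt r (s : ℂ) k).im = 0 ∧ 0 < (omt r (s : ℂ) k).re) := by
  refine ⟨fun ν ↦ ?_, fun s hs₀ hs₁ ↦ ?_⟩
  · obtain ⟨hw, hv⟩ := forall_and.mp (re_int_add_half_div_two_ne_int k ν)
    have hk : (k : ℝ) - 1 / 2 ≠ 0 := by simpa using hw 0
    have hGw := norm_ne_zero_iff.mpr (Complex.Gamma_ne_zero_of_re_ne_int hw)
    have hGv := norm_ne_zero_iff.mpr (Complex.Gamma_ne_zero_of_re_ne_int hv)
    have hreal : omt r (-(1 / 2) - ν * Complex.I) k =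
        ((r⁻¹ * ((((k : ℝ) - 1 / 2) ^ 2 + ν ^ 2) / 2) *
        ‖Complex.Gamma (((k : ℂ) - 1 / 2 + ν * Complex.I) / 2)‖ ^ 2 /
        ‖Complex.Gamma (((k : ℂ) + 1 / 2 + ν * Complex.I) / 2)‖ ^ 2 : ℝ) : ℂ) := by
      rw [omt_principal_series]; push_cast; ring
    exact ⟨by rw [hreal, Complex.ofReal_im], by rw [hreal, Complex.ofReal_re]; positivity,
      omt_principal_series r ν k⟩
  · rw [omt_ofReal, Complex.ofReal_im, Complex.ofReal_re]
    exact ⟨rfl, mul_pos (inv_pos.mpr hr) (mul_gammaRatio_pos (by linarith) hs₁ k)⟩
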